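/- arXiv:1508.00219 — 3 statements merged into one kernel-verified Lean document; each statement's English description precedes it below -/
import Mathlib

section
/- Write s = α1+α2+α3 and define f0(y) = (θ α3 / (C(θ) s)) · f_GE(y; s, λ) · C'(θ·(1−e^{−λ y})^s) for y > 0. Then ∫_0^∞ f0(y) dy = α3 / (α1+α2+α3). (The singular part of the BGEPS distribution carries total mass α3/(α1+α2+α3).) -/
open Real Filter MeasureTheory

/-- The generalized exponential pdf `f_GE(x; α, λ) = α λ e^{-λx} (1-e^{-λx})^{α-1}`. -/
noncomputable def fGE (x α lam : ℝ) : ℝ :=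
  α * lam * Real.exp (-lam * x) * (1 - Real.exp (-lam * x)) ^ (α - 1)

/-!
The integrand is `α3 / (C θ s)` times `(d/dy) C(θ F(y))`, where `F(y) = (1 - e^{-λy})^s` is the
GE distribution function, whose derivative is `f_GE(·; s, λ)`. As `y` runs over `(0, ∞)`,
`θ F(y)` increases from `0` to `θ`, inside the interval of convergence of `C`, where `C' ≥ 0`
because the coefficients are nonnegative. The integral of this nonnegative derivative is
therefore `C(θ) - C(0) = C(θ)`.
-/

open Set Topology

section PowerSeries

variable {c : ℕ → ℝ} {r ρ x : ℝ}

lemma summable_succ_mul_abs_mul_pow (hc : Summable fun n => |c n| * r ^ (n + 1))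
    (hρ : 0 < ρ) (hρr : ρ < r) :
    Summable fun n : ℕ => ((n : ℝ) + 1) * |c n| * ρ ^ n := by
  have hr : 0 < r := hρ.trans hρr
  have hq : ‖ρ / r‖ < 1 := by
    rw [Real.norm_eq_abs, abs_of_pos (div_pos hρ hr), div_lt_one hr]
    exact hρr
  obtain ⟨B, hB⟩ := hc.tendsto_atTop_zero.bddAbove_range
  have hgeom : Summable fun n : ℕ => ((n : ℝ) + 1) * (ρ / r) ^ n := by
    refine ((summable_pow_mul_geometric_of_norm_lt_one 1 hq).add
      (summable_geometric_of_norm_lt_one hq)).congr fun n => ?_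
    ring
  refine .of_nonneg_of_le (fun n => by positivity) (fun n => ?_) (hgeom.mul_left (B / r))
  have hterm : ((n : ℝ) + 1) * |c n| * ρ ^ n
      = |c n| * r ^ (n + 1) * (((n : ℝ) + 1) * (ρ / r) ^ n) / r := by
    rw [div_pow, pow_succ]
    field_simp
  rw [hterm, div_mul_eq_mul_div, div_le_div_iff_of_pos_right hr]
  exact mul_le_mul_of_nonneg_right (hB ⟨n, rfl⟩) (by positivity)

lemma hasDerivAt_tsum_mul_pow_succ (hc : Summable fun n => |c n| * r ^ (n + 1))
    (hx : |x| < r) :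
    HasDerivAt (fun x => ∑' n, c n * x ^ (n + 1)) (∑' n : ℕ, ((n : ℝ) + 1) * c n * x ^ n) x := by
  obtain ⟨ρ, hxρ, hρr⟩ := exists_between hx
  have hρ : 0 < ρ := (abs_nonneg x).trans_lt hxρ
  refine hasDerivAt_tsum_of_isPreconnected (g := fun n y => c n * y ^ (n + 1))
    (g' := fun n y => ((n : ℝ) + 1) * c n * y ^ n)
    (summable_succ_mul_abs_mul_pow hc hρ hρr)
    isOpen_Ioo isPreconnected_Ioo (fun n y _ => ?_) (fun n y hy => ?_)
    (mem_Ioo.2 ⟨neg_neg_of_pos hρ, hρ⟩) (by simp) (abs_lt.1 hxρ)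
  · exact ((hasDerivAt_pow (n + 1) y).const_mul (c n)).congr_deriv (by push_cast; ring)
  · rw [norm_mul, norm_mul, norm_pow, Real.norm_eq_abs, Real.norm_eq_abs, Real.norm_eq_abs,
      abs_of_nonneg (by positivity : (0 : ℝ) ≤ n + 1)]
    gcongr
    exact (abs_lt.2 hy).le

lemma deriv_tsum_mul_pow_succ_nonneg (hc : Summable fun n => |c n| * r ^ (n + 1))
    (hc0 : ∀ n, 0 ≤ c n) (hx0 : 0 ≤ x) (hx : x < r) :
    0 ≤ deriv (fun x => ∑' n, c n * x ^ (n + 1)) x := by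
  rw [(hasDerivAt_tsum_mul_pow_succ hc ((abs_of_nonneg hx0).trans_lt hx)).deriv]
  exact tsum_nonneg fun n => by have := hc0 n; positivity

end PowerSeries

section GeneralizedExponential

noncomputable def geCDF (x α lam : ℝ) : ℝ :=
  (1 - Real.exp (-lam * x)) ^ α

variable {x α lam : ℝ}

lemma one_sub_exp_neg_mul_mem_Icc (hlam : 0 ≤ lam) (hx : 0 ≤ x) :
    1 - Real.exp (-lam * x) ∈ Icc 0 1 := by
  have : Real.exp (-lam * x) ≤ 1 := Real.exp_le_one_iff.2 (by nlinarith)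
  exact ⟨by linarith, by linarith [Real.exp_pos (-lam * x)]⟩

lemma geCDF_mem_Icc (hα : 0 ≤ α) (hlam : 0 ≤ lam) (hx : 0 ≤ x) :
    geCDF x α lam ∈ Icc 0 1 := by
  obtain ⟨h0, h1⟩ := one_sub_exp_neg_mul_mem_Icc hlam hx
  exact ⟨Real.rpow_nonneg h0 α, Real.rpow_le_one h0 h1 hα⟩

lemma geCDF_zero (hα : α ≠ 0) : geCDF 0 α lam = 0 := by
  simp [geCDF, Real.zero_rpow hα]

lemma continuous_geCDF (hα : 0 ≤ α) : Continuous fun x => geCDF x α lam := by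
  unfold geCDF
  fun_prop (disch := exact hα)

lemma tendsto_geCDF_atTop (hlam : 0 < lam) :
    Tendsto (fun x => geCDF x α lam) atTop (𝓝 1) := by
  have hexp : Tendsto (fun x => Real.exp (-lam * x)) atTop (𝓝 0) :=
    Real.tendsto_exp_atBot.comp (tendsto_id.const_mul_atTop_of_neg (neg_neg_of_pos hlam))
  have hbase : Tendsto (fun x => 1 - Real.exp (-lam * x)) atTop (𝓝 1) := by
    simpa using (tendsto_const_nhds (x := (1 : ℝ))).sub hexp
  have := (Real.continuousAt_rpow_const 1 α (Or.inl one_ne_zero)).tendsto.comp hbase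
  simpa [geCDF, Function.comp_def] using this

lemma hasDerivAt_geCDF (hlam : 0 < lam) (hx : 0 < x) :
    HasDerivAt (fun x => geCDF x α lam) (fGE x α lam) x := by
  have hbase : 1 - Real.exp (-lam * x) ≠ 0 := by
    have : Real.exp (-lam * x) < 1 := Real.exp_lt_one_iff.2 (by nlinarith)
    linarith
  have hinner : HasDerivAt (fun x => 1 - Real.exp (-lam * x)) (lam * Real.exp (-lam * x)) x :=
    ((((hasDerivAt_id' x).const_mul (-lam)).exp).const_sub 1).congr_deriv (by ring)
  exact (hinner.rpow_const (p := α) (Or.inl hbase)).congr_deriv (by unfold fGE; ring)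

lemma fGE_nonneg (hα : 0 ≤ α) (hlam : 0 ≤ lam) (hx : 0 ≤ x) : 0 ≤ fGE x α lam := by
  have := Real.rpow_nonneg (one_sub_exp_neg_mul_mem_Icc hlam hx).1 (α - 1)
  unfold fGE
  positivity

end GeneralizedExponential

lemma integral_Ioi_deriv_comp_mul_of_nonneg {F u u' : ℝ → ℝ} {L : ℝ}
    (hu0 : ContinuousWithinAt u (Ici 0) 0) (hu : ∀ y ∈ Ioi 0, HasDerivAt u (u' y) y)
    (hutop : Tendsto u atTop (𝓝 L)) (hF : ∀ y ∈ Ici 0, DifferentiableAt ℝ F (u y))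
    (hFL : ContinuousAt F L) (hnonneg : ∀ y ∈ Ioi 0, 0 ≤ deriv F (u y) * u' y) :
    ∫ y in Ioi 0, deriv F (u y) * u' y = F L - F (u 0) :=
  integral_Ioi_of_hasDerivAt_of_nonneg
    ((hF 0 self_mem_Ici).continuousAt.comp_continuousWithinAt hu0)
    (fun y hy => (hF y (Ioi_subset_Ici_self hy)).hasDerivAt.comp y (hu y hy)) hnonneg
    (hFL.tendsto.comp hutop)

theorem stmt_9_general (a : ℕ → ℝ) (ha : ∀ n, 0 ≤ a n)
    (θ : ℝ) (hθ : 0 < θ)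
    (hrad : ∃ r : ℝ, θ < r ∧ Summable fun n : ℕ => |a (n + 1)| * r ^ (n + 1))
    (C : ℝ → ℝ) (hC : ∀ x : ℝ, C x = ∑' n : ℕ, a (n + 1) * x ^ (n + 1))
    (hCθ : 0 < C θ)
    (α1 α2 α3 lam : ℝ) (hα1 : 0 < α1) (hα2 : 0 < α2) (hα3 : 0 < α3) (hlam : 0 < lam)
    (s : ℝ) (hs : s = α1 + α2 + α3) :
    ∫ y in Set.Ioi (0 : ℝ),
        θ * α3 / (C θ * s) * fGE y s lam * deriv C (θ * (1 - Real.exp (-lam * y)) ^ s) =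
      α3 / (α1 + α2 + α3) := by
  obtain ⟨r, hθr, hsum⟩ := hrad
  have hs0 : 0 < s := by linarith
  have hCfun : C = fun x => ∑' n, a (n + 1) * x ^ (n + 1) := funext hC
  have hC0 : C 0 = 0 := by simp [hC]
  have hdiff : ∀ x ∈ Icc 0 θ, DifferentiableAt ℝ C x := fun x hx => hCfun ▸
    (hasDerivAt_tsum_mul_pow_succ hsum
      ((abs_of_nonneg hx.1).trans_lt (hx.2.trans_lt hθr))).differentiableAt
  have hderiv_nonneg : ∀ x ∈ Icc 0 θ, 0 ≤ deriv C x := fun x hx => hCfun ▸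
    deriv_tsum_mul_pow_succ_nonneg hsum (fun n => ha _) hx.1 (hx.2.trans_lt hθr)
  have hu_mem : ∀ y ∈ Ici (0 : ℝ), θ * geCDF y s lam ∈ Icc 0 θ := fun y hy => by
    obtain ⟨h0, h1⟩ := geCDF_mem_Icc hs0.le hlam.le hy
    exact ⟨by positivity, mul_le_of_le_one_right hθ.le h1⟩
  have hsubst := integral_Ioi_deriv_comp_mul_of_nonneg (F := C)
    (u := fun y => θ * geCDF y s lam) (u' := fun y => θ * fGE y s lam) (L := θ)
    (continuous_const.mul (continuous_geCDF hs0.le)).continuousWithinAt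
    (fun y hy => (hasDerivAt_geCDF hlam hy).const_mul θ)
    (by simpa only [mul_one] using (tendsto_geCDF_atTop hlam).const_mul θ)
    (fun y hy => hdiff _ (hu_mem y hy)) (hdiff θ ⟨hθ.le, le_rfl⟩).continuousAt
    (fun y hy => mul_nonneg (hderiv_nonneg _ (hu_mem y (Ioi_subset_Ici_self hy)))
      (mul_nonneg hθ.le (fGE_nonneg hs0.le hlam.le hy.le)))
  rw [geCDF_zero hs0.ne', mul_zero, hC0, sub_zero] at hsubst
  calc _ = α3 / (C θ * s) * ∫ y in Ioi 0, deriv C (θ * geCDF y s lam) * (θ * fGE y s lam) := by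
        rw [← integral_const_mul]
        congr with y
        unfold geCDF
        ring
    _ = α3 / (α1 + α2 + α3) := by
        rw [hsubst, hs]
        field_simp

/-- The singular part of the BGEPS distribution carries total mass `α3/(α1+α2+α3)`:
with `s = α1+α2+α3`,
`∫_0^∞ (θ α3/(C(θ) s)) f_GE(y; s, λ) C'(θ (1-e^{-λ y})^s) dy = α3/(α1+α2+α3)`. -/
theorem stmt_9 (a : ℕ → ℝ) (ha : ∀ n, 0 ≤ a n) (hne : ∃ n : ℕ, 0 < a (n + 1))
    (θ : ℝ) (hθ : 0 < θ)
    (hrad : ∃ r : ℝ, θ < r ∧ Summable fun n : ℕ => |a (n + 1)| * r ^ (n + 1))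
    (C : ℝ → ℝ) (hC : ∀ x : ℝ, C x = ∑' n : ℕ, a (n + 1) * x ^ (n + 1))
    (hCθ : 0 < C θ)
    (α1 α2 α3 lam : ℝ) (hα1 : 0 < α1) (hα2 : 0 < α2) (hα3 : 0 < α3) (hlam : 0 < lam)
    (s : ℝ) (hs : s = α1 + α2 + α3) :
    ∫ y in Set.Ioi (0 : ℝ),
        θ * α3 / (C θ * s) * fGE y s lam * deriv C (θ * (1 - Real.exp (-lam * y)) ^ s) =
      α3 / (α1 + α2 + α3) :=
  stmt_9_general a ha θ hθ hrad C hC hCθ α1 α2 α3 lam hα1 hα2 hα3 hlam s hs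
end

section
/- Let 0 < θ < 1 and α1, α2, α3, λ > 0, and set K = (1−e^{−λ y1})^{α1+α3}·(1−e^{−λ y2})^{α2}. For 0 < y1 < y2, the mixed second partial derivative ∂²/∂y1 ∂y2 of the function (y1, y2) ↦ (1−θ) K / (1 − θ K) equals (1−θ) · f_GE(y1; α1+α3, λ) · f_GE(y2; α2, λ) · (1 + θ K) / (1 − θ K)³. (The absolutely continuous density f1 of the bivariate generalized exponential–geometric (BGEG) distribution, i.e. the case C(θ) = θ/(1−θ).) -/
open Real Filter

/-- `K(y1,y2) = (1-e^{-λ y1})^{α1+α3} (1-e^{-λ y2})^{α2}`. -/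
noncomputable def KK (α1 α3 α2 lam y1 y2 : ℝ) : ℝ :=
  (1 - Real.exp (-lam * y1)) ^ (α1 + α3) * (1 - Real.exp (-lam * y2)) ^ α2

/-!
The BGEG cdf is `G(F₁(y₁) F₂(y₂))`, where `Fᵢ` are generalized exponential cdfs and
`G(u) = (1-θ)u/(1-θu)`. By the chain rule its mixed partial derivative is
`F₁' F₂' (G''(u) u + G'(u))` at `u = F₁ F₂`, and with `G'(u) = (1-θ)/(1-θu)²`,
`G''(u) = 2θ(1-θ)/(1-θu)³` this is `(1-θ) F₁' F₂' (1+θu)/(1-θu)³`.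
-/

/-- The probability generating function of the geometric law `P(N = n) = (1-θ) θ^(n-1)`
on `{1, 2, …}`. -/
noncomputable def geomPGF (θ u : ℝ) : ℝ :=
  (1 - θ) * u / (1 - θ * u)

noncomputable def geCdf (α lam x : ℝ) : ℝ :=
  (1 - Real.exp (-lam * x)) ^ α

theorem geCdf_mem_Icc {α lam x : ℝ} (hα : 0 ≤ α) (hlam : 0 ≤ lam) (hx : 0 ≤ x) :
    geCdf α lam x ∈ Set.Icc 0 1 := by
  have hexp_le : Real.exp (-lam * x) ≤ 1 := Real.exp_le_one_iff.mpr (by nlinarith)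
  have hbase : 0 ≤ 1 - Real.exp (-lam * x) := by linarith
  exact ⟨Real.rpow_nonneg hbase α,
    Real.rpow_le_one hbase (by linarith [Real.exp_pos (-lam * x)]) hα⟩

theorem hasDerivAt_geCdf (α : ℝ) {lam x : ℝ} (h : lam * x ≠ 0) :
    HasDerivAt (geCdf α lam) (fGE x α lam) x := by
  have hbase : 1 - Real.exp (-lam * x) ≠ 0 := by
    rw [sub_ne_zero, ne_comm, Ne, Real.exp_eq_one_iff]
    simpa [neg_mul] using h
  have hexp : HasDerivAt (fun s => Real.exp (-lam * s)) (Real.exp (-lam * x) * -lam) x := by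
    simpa using ((hasDerivAt_id x).const_mul (-lam)).exp
  exact ((hexp.const_sub 1).rpow_const (Or.inl hbase)).congr_deriv (by unfold fGE; ring)

theorem hasDerivAt_geomPGF {θ u : ℝ} (h : θ * u ≠ 1) :
    HasDerivAt (geomPGF θ) ((1 - θ) / (1 - θ * u) ^ 2) u := by
  have hD : 1 - θ * u ≠ 0 := sub_ne_zero.mpr (Ne.symm h)
  refine (((hasDerivAt_id' u).const_mul (1 - θ)).fun_div
    (((hasDerivAt_id' u).const_mul θ).const_sub 1) hD).congr_deriv ?_
  field_simp
  ring

theorem deriv_deriv_geomPGF_mul {θ : ℝ} {a b : ℝ → ℝ} {a' b' s t : ℝ}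
    (ha : HasDerivAt a a' s) (hb : HasDerivAt b b' t) (h : θ * (a s * b t) ≠ 1) :
    deriv (fun σ => deriv (fun τ => geomPGF θ (a σ * b τ)) t) s =
      (1 - θ) * a' * b' * (1 + θ * (a s * b t)) / (1 - θ * (a s * b t)) ^ 3 := by
  have hD : 1 - θ * (a s * b t) ≠ 0 := sub_ne_zero.mpr (Ne.symm h)
  have hinner : (fun σ => deriv (fun τ => geomPGF θ (a σ * b τ)) t) =ᶠ[nhds s]
      fun σ => (1 - θ) / (1 - θ * (a σ * b t)) ^ 2 * (a σ * b') := by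
    have hcont : ContinuousAt (fun σ => θ * (a σ * b t)) s :=
      continuousAt_const.mul (ha.continuousAt.mul continuousAt_const)
    filter_upwards [hcont.eventually_ne h] with σ hσ
    exact ((hasDerivAt_geomPGF hσ).comp t (hb.const_mul (a σ))).deriv
  rw [hinner.deriv_eq]
  have hden : HasDerivAt (fun σ => 1 - θ * (a σ * b t)) (-(θ * (a' * b t))) s :=
    ((ha.mul_const (b t)).const_mul θ).const_sub 1
  rw [(((hasDerivAt_const s (1 - θ)).fun_div (hden.fun_pow 2) (pow_ne_zero 2 hD)).fun_mul
    (ha.mul_const b')).deriv]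
  norm_num
  field_simp
  ring

theorem stmt_13_general (θ : ℝ) (hθ1 : θ < 1)
    (α1 α2 α3 lam : ℝ) (hα1 : 0 < α1) (hα2 : 0 < α2) (hα3 : 0 < α3) (hlam : 0 < lam)
    (y1 y2 : ℝ) (hy1 : 0 < y1) (h12 : y1 < y2) :
    deriv (fun t1 : ℝ =>
        deriv (fun t2 : ℝ =>
            (1 - θ) * KK α1 α3 α2 lam t1 t2 / (1 - θ * KK α1 α3 α2 lam t1 t2)) y2) y1 =
      (1 - θ) * fGE y1 (α1 + α3) lam * fGE y2 α2 lam *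
        (1 + θ * KK α1 α3 α2 lam y1 y2) / (1 - θ * KK α1 α3 α2 lam y1 y2) ^ 3 := by
  have hy2 : 0 < y2 := hy1.trans h12
  obtain ⟨hA0, hA1⟩ := geCdf_mem_Icc (α := α1 + α3) (by linarith) hlam.le hy1.le
  obtain ⟨hB0, hB1⟩ := geCdf_mem_Icc hα2.le hlam.le hy2.le
  -- `1 - θu` is a convex combination of `1 - θ > 0` and `1`
  have hK : θ * KK α1 α3 α2 lam y1 y2 ≠ 1 := by
    change θ * (geCdf (α1 + α3) lam y1 * geCdf α2 lam y2) ≠ 1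
    nlinarith [mul_nonneg hA0 hB0, mul_le_one₀ hA1 hB0 hB1,
      mul_nonneg (sub_nonneg.mpr hθ1.le) (mul_nonneg hA0 hB0)]
  exact deriv_deriv_geomPGF_mul (hasDerivAt_geCdf _ (mul_pos hlam hy1).ne')
    (hasDerivAt_geCdf _ (mul_pos hlam hy2).ne') hK

/-- Density `f1` of the bivariate generalized exponential–geometric (BGEG) distribution
(the BGEPS case `C(θ) = θ/(1-θ)`): for `0 < y1 < y2`,
`∂²/∂y1∂y2 [(1-θ)K/(1-θK)]
  = (1-θ) f_GE(y1; α1+α3, λ) f_GE(y2; α2, λ) (1+θK)/(1-θK)³`. -/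
theorem stmt_13 (θ : ℝ) (hθ0 : 0 < θ) (hθ1 : θ < 1)
    (α1 α2 α3 lam : ℝ) (hα1 : 0 < α1) (hα2 : 0 < α2) (hα3 : 0 < α3) (hlam : 0 < lam)
    (y1 y2 : ℝ) (hy1 : 0 < y1) (h12 : y1 < y2) :
    deriv (fun t1 : ℝ =>
        deriv (fun t2 : ℝ =>
            (1 - θ) * KK α1 α3 α2 lam t1 t2 / (1 - θ * KK α1 α3 α2 lam t1 t2)) y2) y1 =
      (1 - θ) * fGE y1 (α1 + α3) lam * fGE y2 α2 lam *
        (1 + θ * KK α1 α3 α2 lam y1 y2) / (1 - θ * KK α1 α3 α2 lam y1 y2) ^ 3 :=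
  stmt_13_general θ hθ1 α1 α2 α3 lam hα1 hα2 hα3 hlam y1 y2 hy1 h12
end

section
/- Let 0 < θ < 1 and α1, α2, α3, λ > 0, and set K = (1−e^{−λ y1})^{α1+α3}·(1−e^{−λ y2})^{α2}. For 0 < y1 < y2, the mixed second partial derivative ∂²/∂y1 ∂y2 of the function (y1, y2) ↦ log(1 − θ K) / log(1 − θ) equals −θ · f_GE(y1; α1+α3, λ) · f_GE(y2; α2, λ) / ( log(1−θ) · (1 − θ K)² ). (The absolutely continuous density f1 of the bivariate generalized exponential–logarithmic (BGEL) distribution, i.e. the case C(θ) = −log(1−θ).) -/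
/-!
`K(y1, y2) = a(y1) b(y2)` is a product of two GE distribution functions, whose derivatives are
the GE densities. For any such product the chain and quotient rules give
`∂²/∂s∂t log (1 - θ a(s) b(t)) = -θ a'(s) b'(t) / (1 - θ a(s) b(t))²`, the cross terms
cancelling; the logarithm is differentiable since `0 ≤ K ≤ 1` and `θ < 1` keep `1 - θ K`
positive. The constant factor `1 / log (1 - θ)` passes through both derivatives, even when it
is the junk value `0`.
-/

open Real Filter

section MixedPartial

variable {a b : ℝ → ℝ} {a' b' θ x y : ℝ}

theorem hasDerivAt_log_one_sub_const_mul (c : ℝ) (hb : HasDerivAt b b' y)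
    (hy : 1 - θ * (c * b y) ≠ 0) :
    HasDerivAt (fun t => log (1 - θ * (c * b t))) (-θ * c * b' / (1 - θ * (c * b y))) y := by
  convert ((hb.const_mul c).const_mul θ).const_sub 1 |>.log hy using 1
  ring

theorem deriv_deriv_log_one_sub_mul (ha : HasDerivAt a a' x) (hb : HasDerivAt b b' y)
    (hxy : 1 - θ * (a x * b y) ≠ 0) :
    deriv (fun s => deriv (fun t => log (1 - θ * (a s * b t))) y) x =
      -θ * a' * b' / (1 - θ * (a x * b y)) ^ 2 := by
  have hden : HasDerivAt (fun s => 1 - θ * (a s * b y)) (-(θ * (a' * b y))) x :=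
    ((ha.mul_const (b y)).const_mul θ).const_sub 1
  have h_inner : (fun s => deriv (fun t => log (1 - θ * (a s * b t))) y) =ᶠ[nhds x]
      fun s => -θ * a s * b' / (1 - θ * (a s * b y)) := by
    filter_upwards [hden.continuousAt.eventually_ne hxy] with s hs
    exact (hasDerivAt_log_one_sub_const_mul (a s) hb hs).deriv
  rw [h_inner.deriv_eq, ((ha.const_mul (-θ)).mul_const b' |>.fun_div hden hxy).deriv]
  field_simp
  ring

end MixedPartial

theorem one_sub_exp_neg_mul_mem_Ioo {lam t : ℝ} (hlam : 0 < lam) (ht : 0 < t) :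
    1 - exp (-lam * t) ∈ Set.Ioo 0 1 := by
  constructor
  · have : exp (-lam * t) < 1 := exp_lt_one_iff.2 (by nlinarith)
    linarith
  · linarith [exp_pos (-lam * t)]

theorem hasDerivAt_one_sub_exp_rpow (α : ℝ) {lam t : ℝ} (hlam : 0 < lam) (ht : 0 < t) :
    HasDerivAt (fun s => (1 - exp (-lam * s)) ^ α) (fGE t α lam) t := by
  have hexp : HasDerivAt (fun s => 1 - exp (-lam * s)) (lam * exp (-lam * t)) t := by
    refine (((hasDerivAt_id' t).const_mul (-lam)).exp.const_sub 1).congr_deriv ?_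
    ring
  convert hexp.rpow_const (p := α) (.inl (one_sub_exp_neg_mul_mem_Ioo hlam ht).1.ne') using 1
  rw [fGE]
  ring

theorem KK_mem_Icc {α1 α3 α2 lam y1 y2 : ℝ} (h13 : 0 ≤ α1 + α3) (h2 : 0 ≤ α2)
    (hlam : 0 < lam) (hy1 : 0 < y1) (hy2 : 0 < y2) :
    KK α1 α3 α2 lam y1 y2 ∈ Set.Icc 0 1 := by
  obtain ⟨hu0, hu1⟩ := one_sub_exp_neg_mul_mem_Ioo hlam hy1
  obtain ⟨hv0, hv1⟩ := one_sub_exp_neg_mul_mem_Ioo hlam hy2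
  exact ⟨mul_nonneg (rpow_nonneg hu0.le _) (rpow_nonneg hv0.le _),
    mul_le_one₀ (rpow_le_one hu0.le hu1.le h13) (rpow_nonneg hv0.le _)
      (rpow_le_one hv0.le hv1.le h2)⟩

theorem one_sub_mul_pos_of_le_one {θ K : ℝ} (hθ : θ < 1) (hK0 : 0 ≤ K) (hK1 : K ≤ 1) :
    0 < 1 - θ * K := by
  rcases le_or_gt θ 0 with hθ0 | hθ0
  · nlinarith
  · nlinarith [mul_le_of_le_one_right hθ0.le hK1]

theorem stmt_15_general (θ : ℝ) (hθ1 : θ < 1)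
    (α1 α2 α3 lam : ℝ) (hα1 : 0 < α1) (hα2 : 0 < α2) (hα3 : 0 < α3) (hlam : 0 < lam)
    (y1 y2 : ℝ) (hy1 : 0 < y1) (h12 : y1 < y2) :
    deriv (fun t1 : ℝ =>
        deriv (fun t2 : ℝ =>
            Real.log (1 - θ * KK α1 α3 α2 lam t1 t2) / Real.log (1 - θ)) y2) y1 =
      -θ * fGE y1 (α1 + α3) lam * fGE y2 α2 lam /
        (Real.log (1 - θ) * (1 - θ * KK α1 α3 α2 lam y1 y2) ^ 2) := by
  have hy2 : 0 < y2 := hy1.trans h12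
  obtain ⟨hK0, hK1⟩ := KK_mem_Icc (add_pos hα1 hα3).le hα2.le hlam hy1 hy2
  have hmixed := deriv_deriv_log_one_sub_mul (θ := θ) (hasDerivAt_one_sub_exp_rpow _ hlam hy1)
    (hasDerivAt_one_sub_exp_rpow _ hlam hy2) (one_sub_mul_pos_of_le_one hθ1 hK0 hK1).ne'
  simp only [deriv_div_const, KK] at hmixed ⊢
  rw [hmixed, div_div, mul_comm (_ ^ 2)]

/-- Density `f1` of the bivariate generalized exponential–logarithmic (BGEL) distribution
(the BGEPS case `C(θ) = -log(1-θ)`): for `0 < y1 < y2`,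
`∂²/∂y1∂y2 [log(1-θK)/log(1-θ)]
  = -θ f_GE(y1; α1+α3, λ) f_GE(y2; α2, λ) / (log(1-θ) (1-θK)²)`. -/
theorem stmt_15 (θ : ℝ) (hθ0 : 0 < θ) (hθ1 : θ < 1)
    (α1 α2 α3 lam : ℝ) (hα1 : 0 < α1) (hα2 : 0 < α2) (hα3 : 0 < α3) (hlam : 0 < lam)
    (y1 y2 : ℝ) (hy1 : 0 < y1) (h12 : y1 < y2) :
    deriv (fun t1 : ℝ =>
        deriv (fun t2 : ℝ =>
            Real.log (1 - θ * KK α1 α3 α2 lam t1 t2) / Real.log (1 - θ)) y2) y1 =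
      -θ * fGE y1 (α1 + α3) lam * fGE y2 α2 lam /
        (Real.log (1 - θ) * (1 - θ * KK α1 α3 α2 lam y1 y2) ^ 2) :=
  stmt_15_general θ hθ1 α1 α2 α3 lam hα1 hα2 hα3 hlam y1 y2 hy1 h12
end
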